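/- Let B be a real p×p matrix such that P B Pᵀ is strictly lower triangular for some permutation matrix P (so I − B is invertible), let D be a diagonal p×p matrix with strictly positive diagonal entries, set Σ = (I − B)⁻¹ D (I − B)⁻ᵀ, and let L be a lower triangular matrix with strictly positive diagonal entries satisfying L Lᵀ = Σ. Fix an index r and a nonzero real δ, and set ξ = L⁻¹ (I − B)⁻¹ (δ • e_r). Then ξ has exactly one nonzero coordinate if and only if both of the following hold: (i) B_{rk} = 0 for every index k > r, and (ii) ((I − B)⁻¹)_{kr} = 0 for every index k < r. -/

import Mathlib

/-!
Put `M = L⁻¹ (1 - B)⁻¹`, so that `ξ = δ • M e_r`. The Cholesky identity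
`L Lᵀ = (1 - B)⁻¹ D (1 - B)⁻ᵀ` says `M D Mᵀ = 1`, i.e. `D Mᵀ = (1 - B) L`: up to the factor
`D r r`, the column `M e_r` is the row `r` of `1 - B` multiplied by `L`, while `L (M e_r)` is the
column `r` of `(1 - B)⁻¹`. Multiplying a column vector by a lower triangular matrix preserves the
vanishing of its leading coordinates, multiplying a row vector preserves the vanishing of its
trailing ones. Together with `((1 - B)⁻¹) r r = 1` this shows that `M e_r` is supported at a
single index exactly when the trailing part of the row `r` of `B` and the leading part of the
column `r` of `(1 - B)⁻¹` vanish, the index then being `r`.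
-/

open Matrix

namespace Matrix

variable {ι R K : Type*}

section LowerTriangular

variable [LinearOrder ι] [Fintype ι]

theorem IsLowerTriangular.mulVec_apply [NonUnitalNonAssocSemiring R] {M : Matrix ι ι R}
    (hM : M.IsLowerTriangular) {v : ι → R} {i : ι} (hv : ∀ k < i, v k = 0) :
    (M *ᵥ v) i = M i i * v i := by
  refine Finset.sum_eq_single i (fun k _ hk => ?_) (by simp)
  rcases hk.lt_or_gt with h | h
  · exact mul_eq_zero_of_right _ (hv k h)
  · exact mul_eq_zero_of_left (hM (OrderDual.toDual_lt_toDual.mpr h)) _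

theorem IsLowerTriangular.vecMul_apply [NonUnitalNonAssocSemiring R] {M : Matrix ι ι R}
    (hM : M.IsLowerTriangular) {v : ι → R} {j : ι} (hv : ∀ k, j < k → v k = 0) :
    (v ᵥ* M) j = v j * M j j := by
  refine Finset.sum_eq_single j (fun k _ hk => ?_) (by simp)
  rcases hk.lt_or_gt with h | h
  · exact mul_eq_zero_of_right _ (hM (OrderDual.toDual_lt_toDual.mpr h))
  · exact mul_eq_zero_of_left (hv k h) _

variable [DecidableEq ι]

theorem IsLowerTriangular.inv [CommRing R] {M : Matrix ι ι R} (hM : M.IsLowerTriangular) :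
    M⁻¹.IsLowerTriangular := by
  by_cases hdet : IsUnit M.det
  · have := M.invertibleOfIsUnitDet hdet
    exact blockTriangular_inv_of_blockTriangular hM
  · rw [nonsing_inv_apply_not_isUnit M hdet]
    exact blockTriangular_zero

theorem IsLowerTriangular.inv_apply_self_mul [CommRing R] {M : Matrix ι ι R}
    (hM : M.IsLowerTriangular) (hdet : IsUnit M.det) (i : ι) : M⁻¹ i i * M i i = 1 := by
  rw [← hM.vecMul_apply (v := M⁻¹ i) fun k hk => hM.inv (OrderDual.toDual_lt_toDual.mpr hk),
    ← mul_apply_eq_vecMul, nonsing_inv_mul M hdet, one_apply_eq]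

variable [Field K] {L : Matrix ι ι K}

theorem IsLowerTriangular.isUnit_det (hL : L.IsLowerTriangular) (hdiag : ∀ i, L i i ≠ 0) :
    IsUnit L.det := by
  rw [det_of_isLowerTriangular L hL]
  exact (Finset.prod_ne_zero_iff.mpr fun i _ => hdiag i).isUnit

theorem existsUnique_ne_zero_iff_of_isLowerTriangular (hL : L.IsLowerTriangular)
    (hdiag : ∀ i, L i i ≠ 0) {a u m : ι → K} {d : K} (hd : d ≠ 0) (ha : L *ᵥ m = a)
    (hu : u ᵥ* L = d • m) {r : ι} (har : a r = 1) (hur : u r = 1) :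
    (∃! i, m i ≠ 0) ↔ (∀ k, r < k → u k = 0) ∧ ∀ k < r, a k = 0 := by
  have hdet := hL.isUnit_det hdiag
  have hm : L⁻¹ *ᵥ a = m := by rw [← ha, mulVec_mulVec, nonsing_inv_mul L hdet, one_mulVec]
  have hu' : (d • m) ᵥ* L⁻¹ = u := by rw [← hu, vecMul_vecMul, mul_nonsing_inv L hdet, vecMul_one]
  have hdm : ∀ j, (∀ k, j < k → u k = 0) → d * m j = u j * L j j := fun j h => by
    rw [← hL.vecMul_apply h, hu, Pi.smul_apply, smul_eq_mul]
  constructor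
  · rintro ⟨s, -, huniq⟩
    have hm_zero : ∀ k ≠ s, m k = 0 := fun k hk => by_contra fun h => hk (huniq k h)
    have hsr : s ≤ r := by
      by_contra! hrs
      have h := hL.mulVec_apply (v := m) fun k hk => hm_zero k (hk.trans hrs).ne
      rw [ha, har, hm_zero r hrs.ne, mul_zero] at h
      exact one_ne_zero h
    have hu_zero : ∀ k, r < k → u k = 0 := fun k hk => by
      have hdm_zero : ∀ j, r < j → (d • m) j = 0 := fun j hj => by
        rw [Pi.smul_apply, hm_zero j (hsr.trans_lt hj).ne', smul_zero]
      rw [← hu', hL.inv.vecMul_apply fun j hj => hdm_zero j (hk.trans hj), hdm_zero k hk,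
        zero_mul]
    obtain rfl : s = r := (huniq r fun h0 => hdiag r <| by
      rw [← one_mul (L r r), ← hur, ← hdm r hu_zero, h0, mul_zero]).symm
    refine ⟨hu_zero, fun k hk => ?_⟩
    rw [← ha, hL.mulVec_apply fun j hj => hm_zero j (hj.trans hk).ne, hm_zero k hk.ne, mul_zero]
  · rintro ⟨hu_zero, ha_zero⟩
    have hmr : d * m r = L r r := by rw [hdm r hu_zero, hur, one_mul]
    refine ⟨r, fun h0 => hdiag r (by rw [← hmr, h0, mul_zero]), fun i hi => ?_⟩
    by_contra hir
    rcases lt_or_gt_of_ne hir with h | h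
    · apply hi
      rw [← hm, hL.inv.mulVec_apply fun k hk => ha_zero k (hk.trans h), ha_zero i h, mul_zero]
    · have hmi := hdm i fun k hk => hu_zero k (h.trans hk)
      rw [hu_zero i h, zero_mul] at hmi
      exact hi ((mul_eq_zero.mp hmi).resolve_left hd)

end LowerTriangular

section PermutedStrictlyLowerTriangular

variable [LinearOrder ι] {σ : Equiv.Perm ι}

theorem apply_self_eq_zero_of_forall_le [Zero R] {B : Matrix ι ι R}
    (hB : ∀ i j, i ≤ j → B (σ i) (σ j) = 0) (k : ι) : B k k = 0 := by
  simpa using hB (σ.symm k) (σ.symm k) le_rfl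

theorem isLowerTriangular_one_sub_submatrix [DecidableEq ι] [Ring R] {B : Matrix ι ι R}
    (hB : ∀ i j, i ≤ j → B (σ i) (σ j) = 0) : ((1 - B).submatrix σ σ).IsLowerTriangular :=
  fun i j h => by
    have hij : i < j := OrderDual.toDual_lt_toDual.mp h
    simp [one_apply_ne (σ.injective.ne hij.ne), hB i j hij.le]

variable [Fintype ι] [DecidableEq ι] [CommRing R] {B : Matrix ι ι R}

theorem det_one_sub_eq_one (hB : ∀ i j, i ≤ j → B (σ i) (σ j) = 0) : (1 - B).det = 1 := by
  rw [← det_submatrix_equiv_self σ,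
    det_of_isLowerTriangular _ (isLowerTriangular_one_sub_submatrix hB)]
  simp [hB _ _ le_rfl]

theorem inv_one_sub_apply_self (hB : ∀ i j, i ≤ j → B (σ i) (σ j) = 0) (k : ι) :
    (1 - B)⁻¹ k k = 1 := by
  have hdet : IsUnit ((1 - B).submatrix σ σ).det := by
    rw [det_submatrix_equiv_self, det_one_sub_eq_one hB]
    exact isUnit_one
  simpa [inv_submatrix_equiv, apply_self_eq_zero_of_forall_le hB] using
    (isLowerTriangular_one_sub_submatrix hB).inv_apply_self_mul hdet (σ.symm k)

end PermutedStrictlyLowerTriangular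

theorem mul_transpose_inv_mul_eq [Fintype ι] [DecidableEq ι] [CommRing R]
    {L A D : Matrix ι ι R} (hL : IsUnit L.det) (h : L * Lᵀ = A * D * Aᵀ) :
    D * (L⁻¹ * A)ᵀ = A⁻¹ * L := by
  have hM : (L⁻¹ * A) * (D * (L⁻¹ * A)ᵀ) = 1 :=
    calc (L⁻¹ * A) * (D * (L⁻¹ * A)ᵀ) = L⁻¹ * (A * D * Aᵀ) * Lᵀ⁻¹ := by
          rw [transpose_mul, ← transpose_nonsing_inv]
          simp only [mul_assoc]
      _ = (L⁻¹ * L) * (Lᵀ * Lᵀ⁻¹) := by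
          rw [← h]
          simp only [mul_assoc]
      _ = 1 := by
          rw [nonsing_inv_mul L hL, mul_nonsing_inv Lᵀ (by rwa [det_transpose]), one_mul]
  rw [← inv_eq_right_inv hM, mul_inv_rev, nonsing_inv_nonsing_inv L hL]

end Matrix

/-- Theorem 3 of the paper (characterization of sufficient permutations), stated
in the coordinates of the already-permuted variables.  With `B`, `D`, `L`, `r`,
`δ` and `ξ = L⁻¹ (I - B)⁻¹ (δ • e_r)` as in Theorem 1, the vector `ξ` has
exactly one nonzero coordinate if and only if (i) every parent of `r` precedes
`r` (`B r k = 0` for `k > r`) and (ii) every real descendant of `r` follows `r`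
(`((I - B)⁻¹) k r = 0` for `k < r`). -/
theorem sufficient_permutation_characterization
    {p : ℕ} (B D L : Matrix (Fin p) (Fin p) ℝ)
    (σ : Equiv.Perm (Fin p))
    (hB : ∀ i j : Fin p, i ≤ j → B (σ i) (σ j) = 0)
    (hDdiag : ∀ i j : Fin p, i ≠ j → D i j = 0)
    (hDpos : ∀ i : Fin p, 0 < D i i)
    (hLtri : ∀ i j : Fin p, i < j → L i j = 0)
    (hLdiag : ∀ i : Fin p, 0 < L i i)
    (hLL : L * Lᵀ = (1 - B)⁻¹ * D * ((1 - B)⁻¹)ᵀ)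
    (r : Fin p) (δ : ℝ) (hδ : δ ≠ 0)
    (ξ : Fin p → ℝ)
    (hξ : ξ = (L⁻¹ * (1 - B)⁻¹).mulVec (δ • (Pi.single r 1 : Fin p → ℝ))) :
    (∃! i : Fin p, ξ i ≠ 0) ↔
      ((∀ k : Fin p, r < k → B r k = 0) ∧
        (∀ k : Fin p, k < r → ((1 - B)⁻¹) k r = 0)) := by
  set M := L⁻¹ * (1 - B)⁻¹
  have hL : L.IsLowerTriangular := fun i j h => hLtri i j h
  have hLdet := hL.isUnit_det fun i => (hLdiag i).ne'
  have hD : D.IsDiag := fun i j h => hDdiag i j h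
  have hBdet : IsUnit (1 - B).det := by rw [det_one_sub_eq_one hB]; exact isUnit_one
  have hDM : D * Mᵀ = (1 - B) * L := by
    rw [mul_transpose_inv_mul_eq hLdet hLL, nonsing_inv_nonsing_inv _ hBdet]
  have hu : (1 - B) r ᵥ* L = D r r • M.col r := by
    rw [← mul_apply_eq_vecMul, ← hDM, ← hD.diagonal_diag]
    ext j
    simp [diagonal_mul]
  have ha : L *ᵥ M.col r = (1 - B)⁻¹.col r := by
    rw [← mulVec_single_one, ← mulVec_single_one, mulVec_mulVec,
      mul_nonsing_inv_cancel_left _ _ hLdet]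
  have hξM : ∀ i, ξ i ≠ 0 ↔ M.col r i ≠ 0 := fun i => by simp [hξ, mulVec_smul, hδ]
  rw [existsUnique_congr hξM, existsUnique_ne_zero_iff_of_isLowerTriangular hL
    (fun i => (hLdiag i).ne') (hDpos r).ne' ha hu (inv_one_sub_apply_self hB r)
    (by rw [Matrix.sub_apply, one_apply_eq, apply_self_eq_zero_of_forall_le hB, sub_zero])]
  refine and_congr (forall_congr' fun k => imp_congr_right fun hk => ?_) Iff.rfl
  simp [one_apply_ne hk.ne]
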